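/- Let (Ω, F, μ) be a probability space and let U, W, ε_M, ε_T, ε_Y be square-integrable real random variables, each with mean 0 and variance 1, with all pairwise covariances among {U, W, ε_M, ε_T, ε_Y} equal to 0. Let a, b, c, d, g be real numbers with d² ≤ 1, b² + c² ≤ 1, and a² + g² ≤ 1. Define M := b·U + c·W + √(1−b²−c²)·ε_M, T := a·U + g·W + √(1−a²−g²)·ε_T, and Y := d·W + √(1−d²)·ε_Y. If 1 − (ab + cg)² ≠ 0, then the adjusted regression coefficient of T satisfies β_T = (dg − cd·(ab + cg)) / (1 − (ab + cg)²). -/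

import Mathlib

open MeasureTheory ProbabilityTheory

/-!
The five exogenous variables form an orthonormal family for the covariance, and `M`, `T`, `Y` are
linear combinations of it, so every covariance entering `β_T` is the dot product of coefficient
vectors: `Cov(Y,T) = dg`, `Cov(Y,M) = cd`, `Cov(M,T) = ab + cg`, and `Var T = Var M = 1` because
the square roots complete the coefficient vectors of `T` and `M` to unit length.
-/

/-- Covariance of two real random variables: `Cov(X,Y) = E[XY] - E[X] E[Y]`. -/
noncomputable def covar {Ω : Type*} [MeasurableSpace Ω] (μ : Measure Ω) (X Y : Ω → ℝ) : ℝ :=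
  (∫ ω, X ω * Y ω ∂μ) - (∫ ω, X ω ∂μ) * (∫ ω, Y ω ∂μ)

/-- The population OLS coefficient on `T` when regressing `Y` on `(T, M)`. -/
noncomputable def betaT {Ω : Type*} [MeasurableSpace Ω] (μ : Measure Ω) (Y T M : Ω → ℝ) : ℝ :=
  (covar μ Y T * variance M μ - covar μ Y M * covar μ M T) /
    (variance T μ * variance M μ - (covar μ M T) ^ 2)

section Orthonormal

variable {Ω ι : Type*} [MeasurableSpace Ω] {μ : Measure Ω} {Z : ι → Ω → ℝ}

lemma covar_eq_covariance [IsProbabilityMeasure μ] {X Y : Ω → ℝ}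
    (hX : MemLp X 2 μ) (hY : MemLp Y 2 μ) : covar μ X Y = cov[X, Y; μ] := by
  rw [covariance_eq_sub hX hY, covar]
  rfl

lemma covariance_eq_ite_of_lt [LinearOrder ι]
    (hZ : ∀ i, AEMeasurable (Z i) μ) (hvar : ∀ i, Var[Z i; μ] = 1)
    (hcov : ∀ i j, i < j → cov[Z i, Z j; μ] = 0) (i j : ι) :
    cov[Z i, Z j; μ] = if i = j then 1 else 0 := by
  rcases lt_trichotomy i j with h | rfl | h
  · simp [h.ne, hcov i j h]
  · simp [covariance_self (hZ i), hvar]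
  · rw [covariance_comm, hcov j i h, if_neg h.ne']

variable [Fintype ι] [DecidableEq ι]

lemma covariance_sum_const_mul_of_orthonormal [IsFiniteMeasure μ]
    (hZ2 : ∀ i, MemLp (Z i) 2 μ) (hZ : ∀ i j, cov[Z i, Z j; μ] = if i = j then 1 else 0)
    (x y : ι → ℝ) :
    cov[fun ω ↦ ∑ i, x i * Z i ω, fun ω ↦ ∑ j, y j * Z j ω; μ] = ∑ i, x i * y i := by
  rw [covariance_fun_sum_fun_sum (fun i ↦ (hZ2 i).const_mul (x i))
    (fun j ↦ (hZ2 j).const_mul (y j))]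
  simp only [covariance_const_mul_left, covariance_const_mul_right, hZ, mul_ite, mul_one, mul_zero,
    Finset.sum_ite_eq, Finset.mem_univ, if_true]
  exact Finset.sum_congr rfl fun i _ ↦ mul_comm _ _

lemma covar_sum_const_mul_of_orthonormal [IsProbabilityMeasure μ]
    (hZ2 : ∀ i, MemLp (Z i) 2 μ) (hZ : ∀ i j, cov[Z i, Z j; μ] = if i = j then 1 else 0)
    (x y : ι → ℝ) :
    covar μ (fun ω ↦ ∑ i, x i * Z i ω) (fun ω ↦ ∑ j, y j * Z j ω) = ∑ i, x i * y i := by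
  rw [covar_eq_covariance (memLp_finsetSum _ fun i _ ↦ (hZ2 i).const_mul (x i))
    (memLp_finsetSum _ fun j _ ↦ (hZ2 j).const_mul (y j))]
  exact covariance_sum_const_mul_of_orthonormal hZ2 hZ x y

lemma variance_sum_const_mul_of_orthonormal [IsFiniteMeasure μ]
    (hZ2 : ∀ i, MemLp (Z i) 2 μ) (hZ : ∀ i j, cov[Z i, Z j; μ] = if i = j then 1 else 0)
    (x : ι → ℝ) :
    Var[fun ω ↦ ∑ i, x i * Z i ω; μ] = ∑ i, x i ^ 2 := by
  rw [← covariance_self (memLp_finsetSum _ fun i _ ↦ (hZ2 i).const_mul (x i)).aemeasurable,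
    covariance_sum_const_mul_of_orthonormal hZ2 hZ]
  simp only [sq]

end Orthonormal

theorem stmt18_general {Ω : Type*} [MeasurableSpace Ω] (μ : Measure Ω) [IsProbabilityMeasure μ]
    (U W εM εT εY : Ω → ℝ)
    (hU2 : MemLp U 2 μ) (hW2 : MemLp W 2 μ) (hεM2 : MemLp εM 2 μ)
    (hεT2 : MemLp εT 2 μ) (hεY2 : MemLp εY 2 μ)
    (hUv : variance U μ = 1) (hWv : variance W μ = 1) (hεMv : variance εM μ = 1)
    (hεTv : variance εT μ = 1) (hεYv : variance εY μ = 1)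
    (hUW : covar μ U W = 0)
    (hUεM : covar μ U εM = 0) (hUεT : covar μ U εT = 0) (hUεY : covar μ U εY = 0)
    (hWεM : covar μ W εM = 0) (hWεT : covar μ W εT = 0) (hWεY : covar μ W εY = 0)
    (hεMεT : covar μ εM εT = 0) (hεMεY : covar μ εM εY = 0) (hεTεY : covar μ εT εY = 0)
    (a b c d g : ℝ)
    (hbc : b ^ 2 + c ^ 2 ≤ 1) (hag : a ^ 2 + g ^ 2 ≤ 1)
    (M T Y : Ω → ℝ)
    (hM : M = fun ω => b * U ω + c * W ω + Real.sqrt (1 - b ^ 2 - c ^ 2) * εM ω)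
    (hT : T = fun ω => a * U ω + g * W ω + Real.sqrt (1 - a ^ 2 - g ^ 2) * εT ω)
    (hY : Y = fun ω => d * W ω + Real.sqrt (1 - d ^ 2) * εY ω) :
    betaT μ Y T M =
      (d * g - c * d * (a * b + c * g)) / (1 - (a * b + c * g) ^ 2) := by
  set Z : Fin 5 → Ω → ℝ := ![U, W, εM, εT, εY]
  have hZ2 : ∀ i, MemLp (Z i) 2 μ := by
    intro i; fin_cases i <;> assumption
  have hZ : ∀ i j, cov[Z i, Z j; μ] = if i = j then 1 else 0 := by
    refine covariance_eq_ite_of_lt (fun i ↦ (hZ2 i).aemeasurable)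
      (fun i ↦ by fin_cases i <;> assumption) (fun i j h ↦ ?_)
    rw [← covar_eq_covariance (hZ2 i) (hZ2 j)]
    fin_cases i <;> fin_cases j <;> simp_all [Z]
  have hM' : M = fun ω ↦ ∑ i, ![b, c, √(1 - b ^ 2 - c ^ 2), 0, 0] i * Z i ω := by
    simp [hM, Z, Fin.sum_univ_five]
  have hT' : T = fun ω ↦ ∑ i, ![a, g, 0, √(1 - a ^ 2 - g ^ 2), 0] i * Z i ω := by
    simp [hT, Z, Fin.sum_univ_five]
  have hY' : Y = fun ω ↦ ∑ i, ![0, d, 0, 0, √(1 - d ^ 2)] i * Z i ω := by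
    simp [hY, Z, Fin.sum_univ_five]
  have hvarM : Var[M; μ] = 1 := by
    rw [hM', variance_sum_const_mul_of_orthonormal hZ2 hZ]
    simp [Fin.sum_univ_five, Real.sq_sqrt (show 0 ≤ 1 - b ^ 2 - c ^ 2 by linarith)]
  have hvarT : Var[T; μ] = 1 := by
    rw [hT', variance_sum_const_mul_of_orthonormal hZ2 hZ]
    simp [Fin.sum_univ_five, Real.sq_sqrt (show 0 ≤ 1 - a ^ 2 - g ^ 2 by linarith)]
  have hYT : covar μ Y T = d * g := by
    rw [hY', hT', covar_sum_const_mul_of_orthonormal hZ2 hZ]; simp [Fin.sum_univ_five]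
  have hYM : covar μ Y M = c * d := by
    rw [hY', hM', covar_sum_const_mul_of_orthonormal hZ2 hZ]; simp [Fin.sum_univ_five, mul_comm]
  have hMT : covar μ M T = a * b + c * g := by
    rw [hM', hT', covar_sum_const_mul_of_orthonormal hZ2 hZ]; simp [Fin.sum_univ_five, mul_comm]
  rw [betaT, hYT, hYM, hMT, hvarM, hvarT]
  ring

/-- Adjusted-estimator bias in the M-structure with independent latent causes,
perturbed by a direct effect `g` of `W` on the treatment:
`β_T = (dg − cd (ab + cg)) / (1 − (ab + cg)²)`. -/
theorem stmt18 {Ω : Type*} [MeasurableSpace Ω] (μ : Measure Ω) [IsProbabilityMeasure μ]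
    (U W εM εT εY : Ω → ℝ)
    (hU2 : MemLp U 2 μ) (hW2 : MemLp W 2 μ) (hεM2 : MemLp εM 2 μ)
    (hεT2 : MemLp εT 2 μ) (hεY2 : MemLp εY 2 μ)
    (hUm : ∫ ω, U ω ∂μ = 0) (hWm : ∫ ω, W ω ∂μ = 0) (hεMm : ∫ ω, εM ω ∂μ = 0)
    (hεTm : ∫ ω, εT ω ∂μ = 0) (hεYm : ∫ ω, εY ω ∂μ = 0)
    (hUv : variance U μ = 1) (hWv : variance W μ = 1) (hεMv : variance εM μ = 1)
    (hεTv : variance εT μ = 1) (hεYv : variance εY μ = 1)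
    (hUW : covar μ U W = 0)
    (hUεM : covar μ U εM = 0) (hUεT : covar μ U εT = 0) (hUεY : covar μ U εY = 0)
    (hWεM : covar μ W εM = 0) (hWεT : covar μ W εT = 0) (hWεY : covar μ W εY = 0)
    (hεMεT : covar μ εM εT = 0) (hεMεY : covar μ εM εY = 0) (hεTεY : covar μ εT εY = 0)
    (a b c d g : ℝ)
    (hd : d ^ 2 ≤ 1) (hbc : b ^ 2 + c ^ 2 ≤ 1) (hag : a ^ 2 + g ^ 2 ≤ 1)
    (M T Y : Ω → ℝ)
    (hM : M = fun ω => b * U ω + c * W ω + Real.sqrt (1 - b ^ 2 - c ^ 2) * εM ω)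
    (hT : T = fun ω => a * U ω + g * W ω + Real.sqrt (1 - a ^ 2 - g ^ 2) * εT ω)
    (hY : Y = fun ω => d * W ω + Real.sqrt (1 - d ^ 2) * εY ω)
    (hne : 1 - (a * b + c * g) ^ 2 ≠ 0) :
    betaT μ Y T M =
      (d * g - c * d * (a * b + c * g)) / (1 - (a * b + c * g) ^ 2) :=
  stmt18_general μ U W εM εT εY hU2 hW2 hεM2 hεT2 hεY2 hUv hWv hεMv hεTv hεYv hUW hUεM hUεT hUεY
    hWεM hWεT hWεY hεMεT hεMεY hεTεY a b c d g hbc hag M T Y hM hT hY
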